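/- Let a_1, ..., a_s be positive real numbers and λ > 0. Then N_s(λ; a_1,...,a_s) > (λ^s + (s/2)(a_2 + ⋯ + a_s)·λ^{s-1}) / (s! · a_1 ⋯ a_s), where N_s(λ; a_1,...,a_s) = #{x ∈ ℕ_0^s : a_1 x_1 + ⋯ + a_s x_s ≤ λ}. -/
import Mathlib

open Finset

/-- Number of nonnegative-integer lattice points in the simplex
`a₁x₁ + ⋯ + aₛxₛ ≤ λ`. -/
noncomputable def latticeCount (s : ℕ) (a : Fin s → ℝ) (lam : ℝ) : ℕ :=
  Nat.card {v : Fin s → ℕ // ∑ i, a i * v i ≤ lam}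

lemma sol_finite {s : ℕ} {a : Fin s → ℝ} (ha : ∀ i, 0 < a i) (lam : ℝ) :
    Finite {v : Fin s → ℕ // ∑ i, a i * v i ≤ lam} := by
  have key : ∀ v : Fin s → ℕ, (∑ i, a i * (v i : ℝ) ≤ lam) → ∀ i, v i < ⌊lam / a i⌋₊ + 1 := by
    intro v hv i
    have h1 : a i * (v i : ℝ) ≤ lam :=
      le_trans (Finset.single_le_sum (f := fun j => a j * (v j : ℝ))
        (fun j _ => mul_nonneg (ha j).le (Nat.cast_nonneg _)) (mem_univ i)) hv
    have h2 : (v i : ℝ) ≤ lam / a i := by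
      rw [le_div_iff₀ (ha i)]; linarith [mul_comm (a i) ((v i : ℕ) : ℝ)]
    exact Nat.lt_succ_of_le (Nat.le_floor h2)
  apply Finite.of_injective
    (fun x : {v : Fin s → ℕ // ∑ i, a i * v i ≤ lam} =>
      (fun i => (⟨x.1 i, key x.1 x.2 i⟩ : Fin (⌊lam / a i⌋₊ + 1)) : ∀ i, Fin (⌊lam / a i⌋₊ + 1)))
  intro x y hxy
  apply Subtype.ext
  funext i
  exact congrArg Fin.val (congrFun hxy i)

lemma latticeCount_zero (a : Fin 0 → ℝ) {lam : ℝ} (h : 0 ≤ lam) :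
    latticeCount 0 a lam = 1 := by
  rw [latticeCount]
  haveI : Unique {v : Fin 0 → ℕ // ∑ i, a i * v i ≤ lam} :=
    { default := ⟨fun i => 0, by simpa using h⟩
      uniq := fun v => Subtype.ext (funext fun i => i.elim0) }
  exact Nat.card_unique

lemma latticeCount_succ (s : ℕ) (a : Fin (s + 1) → ℝ) (ha : ∀ i, 0 < a i)
    (lam : ℝ) (p : Fin (s + 1)) :
    latticeCount (s + 1) a lam =
      ∑ k ∈ Finset.range (⌊lam / a p⌋₊ + 1),
        latticeCount s (a ∘ p.succAbove) (lam - a p * k) := by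
  classical
  set m := ⌊lam / a p⌋₊ with hm
  have hsplit : ∀ v : Fin (s + 1) → ℕ,
      ∑ i, a i * (v i : ℝ) = a p * v p + ∑ i, a (p.succAbove i) * v (p.succAbove i) :=
    fun v => Fin.sum_univ_succAbove (fun i => a i * (v i : ℝ)) p
  have hbound : ∀ v : Fin (s + 1) → ℕ, (∑ i, a i * (v i : ℝ) ≤ lam) → v p < m + 1 := by
    intro v hv
    rw [hsplit v] at hv
    have h0 : (0:ℝ) ≤ ∑ i, a (p.succAbove i) * v (p.succAbove i) :=
      Finset.sum_nonneg fun i _ => mul_nonneg (ha _).le (Nat.cast_nonneg _)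
    have h2 : (v p : ℝ) ≤ lam / a p := by
      rw [le_div_iff₀ (ha p)]; nlinarith [ha p]
    exact Nat.lt_succ_of_le (Nat.le_floor h2)
  let T : ℕ → Type := fun k =>
    {w : Fin s → ℕ // ∑ i, (a ∘ p.succAbove) i * w i ≤ lam - a p * k}
  let f : (Σ k : Fin (m + 1), T k.1) → {v : Fin (s + 1) → ℕ // ∑ i, a i * v i ≤ lam} :=
    fun x => ⟨p.insertNth x.1.1 x.2.1, by
      rw [hsplit]
      simp only [Fin.insertNth_apply_same, Fin.insertNth_apply_succAbove]
      have := x.2.2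
      simp only [T, Function.comp] at this
      linarith⟩
  have hf : Function.Bijective f := by
    constructor
    · rintro ⟨⟨k, hk⟩, w, hw⟩ ⟨⟨k', hk'⟩, w', hw'⟩ h
      have h' := congrArg Subtype.val h
      simp only [f] at h'
      have hkk : k = k' := by
        have := congrFun h' p
        simpa [Fin.insertNth_apply_same] using this
      subst hkk
      have hww : w = w' := by
        funext i
        have := congrFun h' (p.succAbove i)
        simpa [Fin.insertNth_apply_succAbove] using this
      subst hww
      rfl
    · rintro ⟨v, hv⟩
      refine ⟨⟨⟨v p, hbound v hv⟩, ⟨fun i => v (p.succAbove i), ?_⟩⟩, ?_⟩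
      · have := hv
        rw [hsplit v] at this
        simp only [T, Function.comp]
        linarith
      · apply Subtype.ext
        funext i
        simp only [f]
        rcases eq_or_ne i p with rfl | h
        · simp [Fin.insertNth_apply_same]
        · obtain ⟨i', rfl⟩ := Fin.exists_succAbove_eq h
          simp [Fin.insertNth_apply_succAbove]
  haveI : ∀ k : ℕ, Finite (T k) := fun k => sol_finite (fun i => ha _) _
  haveI : ∀ k : Fin (m+1), Fintype (T k.1) := fun k => Fintype.ofFinite _
  have hcard : latticeCount (s+1) a lam = Nat.card (Σ k : Fin (m + 1), T k.1) :=
    (Nat.card_eq_of_bijective f hf).symm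
  rw [hcard, Nat.card_eq_fintype_card, Fintype.card_sigma]
  have hpt : ∀ k : Fin (m+1), Fintype.card (T k.1)
      = latticeCount s (a ∘ p.succAbove) (lam - a p * k.1) := by
    intro k
    rw [← Nat.card_eq_fintype_card]
    rfl
  rw [Finset.sum_congr rfl fun k _ => hpt k]
  exact Fin.sum_univ_eq_sum_range (fun k => latticeCount s (a ∘ p.succAbove) (lam - a p * k)) (m+1)

lemma pair_le {x y : ℝ} (hy : 0 ≤ y) (hxy : y ≤ x) (i j : ℕ) :
    x ^ i * y ^ j + x ^ j * y ^ i ≤ x ^ (i + j) + y ^ (i + j) := by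
  have h1 : (0:ℝ) ≤ (x ^ i - y ^ i) * (x ^ j - y ^ j) :=
    mul_nonneg (sub_nonneg.2 (pow_le_pow_left₀ hy hxy i))
      (sub_nonneg.2 (pow_le_pow_left₀ hy hxy j))
  have h2 : x ^ (i + j) = x ^ i * x ^ j := pow_add x i j
  have h3 : y ^ (i + j) = y ^ i * y ^ j := pow_add y i j
  nlinarith [h1]

lemma trapezoid {x y : ℝ} (hy : 0 ≤ y) (hxy : y ≤ x) (n : ℕ) :
    2 * (x ^ (n + 1) - y ^ (n + 1)) ≤ ((n:ℝ) + 1) * (x - y) * (x ^ n + y ^ n) := by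
  have hgeom : x ^ (n+1) - y ^ (n+1)
      = (∑ i ∈ Finset.range (n+1), x ^ i * y ^ (n - i)) * (x - y) := by
    exact (geom_sum₂_mul x y (n+1)).symm
  have hsum : 2 * ∑ i ∈ Finset.range (n+1), x ^ i * y ^ (n - i)
      ≤ ((n:ℝ) + 1) * (x ^ n + y ^ n) := by
    have hrefl : ∑ i ∈ Finset.range (n+1), x ^ i * y ^ (n - i)
        = ∑ i ∈ Finset.range (n+1), x ^ (n - i) * y ^ i := by
      rw [← Finset.sum_range_reflect]
      apply Finset.sum_congr rfl
      intro i hi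
      have hi' : i ≤ n := Nat.lt_succ_iff.mp (Finset.mem_range.mp hi)
      congr 2 <;> omega
    calc 2 * ∑ i ∈ Finset.range (n+1), x ^ i * y ^ (n - i)
        = ∑ i ∈ Finset.range (n+1), (x ^ i * y ^ (n - i) + x ^ (n - i) * y ^ i) := by
          rw [Finset.sum_add_distrib, ← hrefl]; ring
      _ ≤ ∑ i ∈ Finset.range (n+1), (x ^ n + y ^ n) := by
          apply Finset.sum_le_sum
          intro i hi
          have hi' : i ≤ n := Nat.lt_succ_iff.mp (Finset.mem_range.mp hi)
          have := pair_le hy hxy i (n - i)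
          rwa [Nat.add_sub_cancel' hi'] at this
      _ = ((n:ℝ) + 1) * (x ^ n + y ^ n) := by
          rw [Finset.sum_const, Finset.card_range]; push_cast; ring
  have hxy' : 0 ≤ x - y := sub_nonneg.2 hxy
  calc 2 * (x ^ (n+1) - y ^ (n+1))
      = (2 * ∑ i ∈ Finset.range (n+1), x ^ i * y ^ (n - i)) * (x - y) := by rw [hgeom]; ring
    _ ≤ (((n:ℝ) + 1) * (x ^ n + y ^ n)) * (x - y) := mul_le_mul_of_nonneg_right hsum hxy'
    _ = ((n:ℝ) + 1) * (x - y) * (x ^ n + y ^ n) := by ring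

lemma sum_pow_A {b lam : ℝ} (hb : 0 < b) (hlam : 0 ≤ lam) {n : ℕ} (hn : 1 ≤ n) :
    lam ^ (n + 1) + ((n:ℝ) + 1) * b * lam ^ n / 2 ≤
      ((n:ℝ) + 1) * b * ∑ k ∈ Finset.range (⌊lam / b⌋₊ + 1), (lam - b * k) ^ n := by
  set m := ⌊lam / b⌋₊ with hm
  have hfloor : (m : ℝ) ≤ lam / b := Nat.floor_le (div_nonneg hlam hb.le)
  have hfloor' : lam / b < (m : ℝ) + 1 := Nat.lt_floor_add_one _
  have hxk : ∀ k : ℕ, k ≤ m → 0 ≤ lam - b * k := by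
    intro k hk
    have h : (k : ℝ) ≤ lam / b := le_trans (by exact_mod_cast hk) hfloor
    rw [le_div_iff₀ hb] at h
    linarith [mul_comm b (k:ℝ)]
  have hr : lam - b * m < b := by
    have h := hfloor'
    rw [div_lt_iff₀ hb] at h
    nlinarith
  have htel : ∑ k ∈ Finset.range m, ((lam - b * k) ^ (n+1) - (lam - b * (k+1:ℕ)) ^ (n+1))
      = lam ^ (n+1) - (lam - b * m) ^ (n+1) := by
    rw [Finset.sum_range_sub' (fun k : ℕ => (lam - b * k) ^ (n+1))]
    norm_num
  have hterm : ∀ k ∈ Finset.range m,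
      2 * ((lam - b * k) ^ (n+1) - (lam - b * (k+1:ℕ)) ^ (n+1))
        ≤ ((n:ℝ) + 1) * b * ((lam - b * k) ^ n + (lam - b * (k+1:ℕ)) ^ n) := by
    intro k hk
    have hk' : k + 1 ≤ m := Finset.mem_range.mp hk
    have h1 : 0 ≤ lam - b * (k+1:ℕ) := hxk _ hk'
    have h2 : lam - b * (k+1:ℕ) ≤ lam - b * k := by push_cast; nlinarith
    have h3 := trapezoid h1 h2 n
    have hd : (lam - b * k) - (lam - b * (k+1:ℕ)) = b := by push_cast; ring
    rw [hd] at h3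
    linarith [h3]
  have hsum1 : 2 * (lam ^ (n+1) - (lam - b * m) ^ (n+1))
      ≤ ((n:ℝ) + 1) * b *
        (∑ k ∈ Finset.range m, ((lam - b * k) ^ n + (lam - b * (k+1:ℕ)) ^ n)) := by
    rw [← htel, Finset.mul_sum, Finset.mul_sum]
    exact Finset.sum_le_sum hterm
  have hsplit : ∑ k ∈ Finset.range m, ((lam - b * k) ^ n + (lam - b * (k+1:ℕ)) ^ n)
      = 2 * (∑ k ∈ Finset.range (m+1), (lam - b * k) ^ n) - lam ^ n - (lam - b * m) ^ n := by
    rw [Finset.sum_add_distrib]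
    have e1 : ∑ k ∈ Finset.range (m+1), (lam - b * (k:ℕ)) ^ n
        = (∑ k ∈ Finset.range m, (lam - b * (k:ℕ)) ^ n) + (lam - b * m) ^ n :=
      Finset.sum_range_succ _ m
    have e2 : ∑ k ∈ Finset.range (m+1), (lam - b * (k:ℕ)) ^ n
        = (∑ k ∈ Finset.range m, (lam - b * (k+1:ℕ)) ^ n) + (lam - b * (0:ℕ)) ^ n :=
      Finset.sum_range_succ' _ m
    have e3 : (lam - b * (0:ℕ)) ^ n = lam ^ n := by norm_num
    linarith
  have hgm0 : 0 ≤ lam - b * m := hxk m le_rfl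
  have hgmn : 0 ≤ (lam - b * m) ^ n := pow_nonneg hgm0 n
  have key : 2 * (lam - b * m) ^ (n+1) ≤ ((n:ℝ) + 1) * b * (lam - b * m) ^ n := by
    have h1 : (lam - b * m) ^ (n+1) ≤ (lam - b * m) ^ n * b := by
      rw [pow_succ]
      exact mul_le_mul_of_nonneg_left hr.le hgmn
    have hn2 : (2:ℝ) ≤ (n:ℝ) + 1 := by
      have : (1:ℝ) ≤ (n:ℝ) := by exact_mod_cast hn
      linarith
    nlinarith [mul_nonneg hgmn hb.le]
  have expand : ((n:ℝ) + 1) * b *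
      (∑ k ∈ Finset.range m, ((lam - b * k) ^ n + (lam - b * (k+1:ℕ)) ^ n))
      = 2 * (((n:ℝ) + 1) * b * ∑ k ∈ Finset.range (m+1), (lam - b * k) ^ n)
        - ((n:ℝ) + 1) * b * lam ^ n - ((n:ℝ) + 1) * b * (lam - b * m) ^ n := by
    rw [hsplit]; ring
  rw [expand] at hsum1
  linarith

lemma sum_pow_B {b lam : ℝ} (hb : 0 < b) (hlam : 0 ≤ lam) (n : ℕ) :
    lam ^ (n + 1) ≤
      ((n:ℝ) + 1) * b * ∑ k ∈ Finset.range (⌊lam / b⌋₊ + 1), (lam - b * k) ^ n := by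
  rcases Nat.eq_zero_or_pos n with rfl | hn
  · simp only [pow_zero, Finset.sum_const, Finset.card_range, nsmul_eq_mul, Nat.cast_zero,
      zero_add, pow_one, mul_one, one_mul]
    have hfloor' : lam / b < (⌊lam / b⌋₊ : ℝ) + 1 := Nat.lt_floor_add_one _
    rw [div_lt_iff₀ hb] at hfloor'
    push_cast
    nlinarith
  · have h := sum_pow_A hb hlam hn
    have h2 : 0 ≤ ((n:ℝ) + 1) * b * lam ^ n / 2 := by positivity
    linarith

lemma lehmer_main : ∀ s : ℕ, 1 ≤ s → ∀ a : Fin s → ℝ, (∀ i, 0 < a i) → ∀ lam : ℝ, 0 ≤ lam →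
    ∀ j : Fin s,
    lam ^ s + ((s:ℝ) / 2) * (∑ i ∈ Finset.univ.erase j, a i) * lam ^ (s - 1)
      < (latticeCount s a lam : ℝ) * ((s.factorial : ℝ) * ∏ i, a i) := by
  intro s hs
  induction s, hs using Nat.le_induction with
  | base =>
    intro a ha lam hlam j
    have hj : j = 0 := Subsingleton.elim _ _
    subst hj
    have herase : (Finset.univ.erase (0 : Fin 1)) = ∅ := rfl
    rw [herase]
    have hc : latticeCount 1 a lam = ⌊lam / a 0⌋₊ + 1 := by
      rw [latticeCount_succ 0 a ha lam 0]
      have h1 : ∀ k ∈ Finset.range (⌊lam / a 0⌋₊ + 1),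
          latticeCount 0 (a ∘ Fin.succAbove 0) (lam - a 0 * k) = 1 := by
        intro k hk
        apply latticeCount_zero
        have hk' : (k:ℝ) ≤ lam / a 0 :=
          le_trans (Nat.cast_le.2 (Nat.lt_succ_iff.mp (Finset.mem_range.mp hk)))
            (Nat.floor_le (div_nonneg hlam (ha 0).le))
        rw [le_div_iff₀ (ha 0)] at hk'
        linarith [mul_comm (a 0) (k:ℝ)]
      rw [Finset.sum_congr rfl h1, Finset.sum_const, Finset.card_range, smul_eq_mul, mul_one]
    rw [hc]
    have hfl : lam / a 0 < (⌊lam / a 0⌋₊ : ℝ) + 1 := Nat.lt_floor_add_one _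
    rw [div_lt_iff₀ (ha 0)] at hfl
    have hprod : ∏ i, a i = a 0 := Fin.prod_univ_one a
    simp only [Finset.sum_empty, mul_zero, zero_mul, add_zero, pow_one, Nat.factorial_one,
      Nat.cast_one, one_mul, hprod]
    push_cast
    nlinarith
  | succ n hn ih =>
    intro a ha lam hlam j
    obtain ⟨p, hpj⟩ : ∃ p : Fin (n+1), j ≠ p := by
      rcases eq_or_ne j 0 with rfl | h
      · exact ⟨⟨1, by omega⟩, by simp [Fin.ext_iff]⟩
      · exact ⟨0, h⟩
    obtain ⟨j', hj'⟩ := Fin.exists_succAbove_eq hpj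
    set b := a p with hb
    have hbpos : 0 < b := ha p
    set m := ⌊lam / b⌋₊ with hm
    set a' : Fin n → ℝ := a ∘ p.succAbove with ha'def
    have ha' : ∀ i, 0 < a' i := fun i => ha _
    set σ' := ∑ i ∈ Finset.univ.erase j', a' i with hσ'
    have hσ'nn : 0 ≤ σ' := Finset.sum_nonneg fun i _ => (ha' i).le
    have hμ : ∀ k : ℕ, k ∈ Finset.range (m+1) → 0 ≤ lam - b * k := by
      intro k hk
      have hk' : (k:ℝ) ≤ lam / b :=
        le_trans (Nat.cast_le.2 (Nat.lt_succ_iff.mp (Finset.mem_range.mp hk)))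
          (Nat.floor_le (div_nonneg hlam hbpos.le))
      rw [le_div_iff₀ hbpos] at hk'
      linarith [mul_comm b (k:ℝ)]
    have hrec : latticeCount (n+1) a lam
        = ∑ k ∈ Finset.range (m+1), latticeCount n a' (lam - b * k) :=
      latticeCount_succ n a ha lam p
    set D := (n.factorial : ℝ) * ∏ i, a' i with hD
    have hDpos : 0 < D := by
      apply mul_pos (by exact_mod_cast n.factorial_pos)
      exact Finset.prod_pos fun i _ => ha' i
    have hstrict : ∑ k ∈ Finset.range (m+1),
        ((lam - b * k) ^ n + ((n:ℝ) / 2) * σ' * (lam - b * k) ^ (n-1))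
        < ∑ k ∈ Finset.range (m+1), (latticeCount n a' (lam - b * k) : ℝ) * D := by
      apply Finset.sum_lt_sum_of_nonempty ⟨0, Finset.mem_range.mpr (Nat.succ_pos m)⟩
      intro k hk
      exact ih a' ha' _ (hμ k hk) j'
    set S1 := ∑ k ∈ Finset.range (m+1), (lam - b * k) ^ n with hS1
    set S2 := ∑ k ∈ Finset.range (m+1), (lam - b * k) ^ (n-1) with hS2
    have hLHS : ∑ k ∈ Finset.range (m+1),
        ((lam - b * k) ^ n + ((n:ℝ) / 2) * σ' * (lam - b * k) ^ (n-1))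
        = S1 + ((n:ℝ) / 2) * σ' * S2 := by
      rw [Finset.sum_add_distrib, ← Finset.mul_sum]
    have hRHS : ∑ k ∈ Finset.range (m+1), (latticeCount n a' (lam - b * k) : ℝ) * D
        = (latticeCount (n+1) a lam : ℝ) * D := by
      rw [← Finset.sum_mul, hrec]
      push_cast
      ring
    rw [hLHS, hRHS] at hstrict
    -- analytic bounds
    have fA := sum_pow_A hbpos hlam hn
    have fB : lam ^ n ≤ (n:ℝ) * b * S2 := by
      have e : n - 1 + 1 = n := Nat.succ_pred_eq_of_pos hn
      have h := sum_pow_B hbpos hlam (n-1)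
      rw [e] at h
      have ecast : ((n-1 : ℕ):ℝ) + 1 = (n:ℝ) := by
        rw [Nat.cast_sub hn]; push_cast; ring
      rw [ecast] at h
      exact h
    -- sums of coefficients
    have t1 : ∑ i ∈ Finset.univ.erase j, a i = (∑ i, a i) - a j :=
      Finset.sum_erase_eq_sub (Finset.mem_univ j)
    have t2 : σ' = (∑ i, a' i) - a j := by
      rw [hσ', Finset.sum_erase_eq_sub (Finset.mem_univ j')]
      congr 1
      simp [ha'def, hj']
    have t3 : ∑ i, a i = b + ∑ i, a' i := Fin.sum_univ_succAbove a p
    have hσ : ∑ i ∈ Finset.univ.erase j, a i = b + σ' := by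
      rw [t1, t2, t3]; ring
    have hprod : ∏ i, a i = b * ∏ i, a' i := Fin.prod_univ_succAbove a p
    have hfact : ((n+1).factorial : ℝ) = ((n:ℝ) + 1) * (n.factorial : ℝ) := by
      rw [Nat.factorial_succ]; push_cast; ring
    -- final chain
    have hg2 : ((n:ℝ)+1)/2 * σ' * lam ^ n ≤ ((n:ℝ)+1)/2 * σ' * ((n:ℝ) * b * S2) :=
      mul_le_mul_of_nonneg_left fB (by positivity)
    have step1 : lam ^ (n+1) + (((n:ℝ)+1) / 2) * (b + σ') * lam ^ n
        ≤ (S1 + ((n:ℝ) / 2) * σ' * S2) * (((n:ℝ) + 1) * b) := by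
      have hne : (n:ℝ) ≠ 0 := by positivity
      have expand : (S1 + ((n:ℝ) / 2) * σ' * S2) * (((n:ℝ) + 1) * b)
          = ((n:ℝ)+1) * b * S1 + ((n:ℝ)+1)/2 * σ' * ((n:ℝ) * b * S2) := by
        field_simp
      rw [expand]
      nlinarith [fA, hg2]
    have step2 : (S1 + ((n:ℝ) / 2) * σ' * S2) * (((n:ℝ) + 1) * b)
        < (latticeCount (n+1) a lam : ℝ) * D * (((n:ℝ) + 1) * b) :=
      mul_lt_mul_of_pos_right hstrict (by positivity)
    have final : (latticeCount (n+1) a lam : ℝ) * D * (((n:ℝ) + 1) * b)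
        = (latticeCount (n+1) a lam : ℝ) * (((n+1).factorial : ℝ) * ∏ i, a i) := by
      rw [hfact, hprod, hD]; ring
    rw [final] at step2
    have goalrw : lam ^ (n+1) + (((n+1:ℕ):ℝ) / 2) * (∑ i ∈ Finset.univ.erase j, a i) * lam ^ ((n+1) - 1)
        = lam ^ (n+1) + (((n:ℝ)+1) / 2) * (b + σ') * lam ^ n := by
      rw [hσ]
      push_cast
      ring
    rw [goalrw]
    linarith

theorem stmt_5 (s : ℕ) (hs : 1 ≤ s) (a : Fin s → ℝ) (ha : ∀ i, 0 < a i)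
    (lam : ℝ) (hlam : 0 < lam) :
    (latticeCount s a lam : ℝ) >
      (lam ^ s + (s / 2 : ℝ) * (∑ i ∈ Finset.univ.erase ⟨0, hs⟩, a i) * lam ^ (s - 1)) /
        ((s.factorial : ℝ) * ∏ i, a i) := by
  have h := lehmer_main s hs a ha lam hlam.le ⟨0, hs⟩
  have hpos : 0 < (s.factorial : ℝ) * ∏ i, a i := by
    apply mul_pos (by exact_mod_cast s.factorial_pos)
    exact Finset.prod_pos fun i _ => ha i
  rw [gt_iff_lt, div_lt_iff₀ hpos]
  exact h
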